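/- Let (X, c) and (Y, d) be quantum Markov chains on ℂ^{n·m} (weights indexed by Fin n × Fin m) and let ρ be a density operator on ℂ^n. Let (X, pe_ρ ∘ c) and (Y, pe_ρ ∘ d) be the partially evaluated quantum Markov chains on ℂ^m, obtained by replacing each weight L by pe(L), where pe(L) j j' = ∑_{i, i'} ρ i' i * L (i,j) (i',j'). If states x : X and y : Y are kernel bisimilar in (X, c) and (Y, d), then x and y are kernel bisimilar in (X, pe_ρ ∘ c) and (Y, pe_ρ ∘ d). -/

import Mathlib

open Matrix ComplexOrder

/-- A density operator on ℂ^n: a positive semidefinite matrix of trace one. -/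
def IsDensity {n : ℕ} (ρ : Matrix (Fin n) (Fin n) ℂ) : Prop :=
  ρ.PosSemidef ∧ ρ.trace = 1

/-- Pushforward of a (finitely supported) weight function along `f`. -/
noncomputable def push {M : Type*} [AddCommMonoid M] {X Z : Type} (f : X → Z)
    (Δ : X → M) : Z → M :=
  fun z => ∑ᶠ (x : X) (_ : f x = z), Δ x

/-- A quantum (sub)distribution on `X` with matrix weights indexed by `ι`. -/
def IsQDist {ι : Type} [Fintype ι] [DecidableEq ι] {X : Type}
    (Δ : X → Matrix ι ι ℂ) : Prop :=
  (Function.support Δ).Finite ∧ (∀ x, (Δ x).PosSemidef) ∧ (1 - ∑ᶠ x, Δ x).PosSemidef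

/-- A quantum Markov chain with matrix weights indexed by `ι`. -/
def IsQMC {ι : Type} [Fintype ι] [DecidableEq ι] {X : Type}
    (c : X → X → Matrix ι ι ℂ) : Prop :=
  ∀ x, IsQDist (c x)

/-- A homomorphism of quantum Markov chains. -/
def IsQHom {ι : Type} [Fintype ι] [DecidableEq ι] {X Z : Type}
    (c : X → X → Matrix ι ι ℂ) (e : Z → Z → Matrix ι ι ℂ) (f : X → Z) : Prop :=
  ∀ x, e (f x) = push f (c x)

/-- Kernel bisimilarity of states of two quantum Markov chains. -/
def QKernelBisim {ι : Type} [Fintype ι] [DecidableEq ι] {X Y : Type}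
    (c : X → X → Matrix ι ι ℂ) (dY : Y → Y → Matrix ι ι ℂ) (x : X) (y : Y) : Prop :=
  ∃ (Z : Type) (e : Z → Z → Matrix ι ι ℂ) (m₁ : X → Z) (m₂ : Y → Z),
    IsQMC e ∧ IsQHom c e m₁ ∧ IsQHom dY e m₂ ∧ m₁ x = m₂ y

/-- Partial evaluation of a weight on ℂ^{n·m} at a density operator on ℂ^n:
the partial trace over the first factor of `(ρ ⊗ₖ 1) * L`. -/
noncomputable def pe {n m : ℕ} (ρ : Matrix (Fin n) (Fin n) ℂ)
    (L : Matrix (Fin n × Fin m) (Fin n × Fin m) ℂ) : Matrix (Fin m) (Fin m) ℂ :=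
  Matrix.of fun j j' => ∑ i : Fin n, ∑ i' : Fin n, ρ i' i * L (i, j) (i', j')

/-- `pe ρ` as an additive monoid homomorphism. -/
noncomputable def peHom {n m : ℕ} (ρ : Matrix (Fin n) (Fin n) ℂ) :
    Matrix (Fin n × Fin m) (Fin n × Fin m) ℂ →+ Matrix (Fin m) (Fin m) ℂ where
  toFun := pe ρ
  map_zero' := by ext j j'; simp [pe]
  map_add' A B := by
    ext j j'
    simp [pe, mul_add, Finset.sum_add_distrib]

lemma pe_one {n m : ℕ} {ρ : Matrix (Fin n) (Fin n) ℂ} (hρ : ρ.trace = 1) :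
    pe (m := m) ρ 1 = 1 := by
  ext j j'
  simp only [pe, of_apply, one_apply, Prod.mk.injEq, mul_ite, mul_one, mul_zero]
  by_cases h : j = j'
  · simp only [h, and_true, Finset.sum_ite_eq', Finset.mem_univ, if_true]
    simpa [Matrix.trace, Matrix.diag] using hρ
  · simp [h]

noncomputable def Cmat {n m : ℕ} (B : Matrix (Fin n) (Fin n) ℂ) (k : Fin n) :
    Matrix (Fin n × Fin m) (Fin m) ℂ :=
  Matrix.of fun p j => star (B k p.1) * (if p.2 = j then 1 else 0)

lemma Cmat_entry {n m : ℕ} (B : Matrix (Fin n) (Fin n) ℂ)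
    (L : Matrix (Fin n × Fin m) (Fin n × Fin m) ℂ) (k : Fin n) (j j' : Fin m) :
    ((Cmat (m := m) B k)ᴴ * L * (Cmat (m := m) B k)) j j'
      = ∑ i : Fin n, ∑ i' : Fin n, star (B k i') * B k i * L (i, j) (i', j') := by
  simp only [mul_apply, conjTranspose_apply, Cmat, of_apply, Fintype.sum_prod_type,
    star_mul', star_star, apply_ite (star : ℂ → ℂ), star_one, star_zero,
    mul_ite, ite_mul, mul_one, mul_zero, zero_mul, one_mul, Finset.sum_ite_eq',
    Finset.mem_univ, if_true, Finset.sum_mul, Finset.mul_sum]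
  rw [Finset.sum_comm]
  refine Finset.sum_congr rfl fun i _ => Finset.sum_congr rfl fun i' _ => ?_
  ring

lemma pe_eq_sum {n m : ℕ} (B : Matrix (Fin n) (Fin n) ℂ)
    (L : Matrix (Fin n × Fin m) (Fin n × Fin m) ℂ) :
    pe (Bᴴ * B) L = ∑ k : Fin n, (Cmat (m := m) B k)ᴴ * L * (Cmat (m := m) B k) := by
  ext j j'
  rw [Matrix.sum_apply]
  simp only [Cmat_entry]
  rw [Finset.sum_comm]
  simp only [pe, of_apply, mul_apply, conjTranspose_apply, Finset.sum_mul]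
  refine Finset.sum_congr rfl fun i _ => ?_
  rw [Finset.sum_comm]

lemma pe_psd {n m : ℕ} {ρ : Matrix (Fin n) (Fin n) ℂ}
    {L : Matrix (Fin n × Fin m) (Fin n × Fin m) ℂ}
    (hρ : ρ.PosSemidef) (hL : L.PosSemidef) : (pe ρ L).PosSemidef := by
  obtain ⟨B, rfl⟩ : ∃ B : Matrix (Fin n) (Fin n) ℂ, ρ = Bᴴ * B := by
    open scoped MatrixOrder Matrix.Norms.L2Operator in
    obtain ⟨B, hB⟩ := CStarAlgebra.nonneg_iff_eq_star_mul_self.mp hρ.nonneg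
    exact ⟨B, hB⟩
  rw [pe_eq_sum]
  exact Finset.sum_induction (fun k => (Cmat (m := m) B k)ᴴ * L * (Cmat (m := m) B k))
    Matrix.PosSemidef (fun A B hA hB => hA.add hB) Matrix.PosSemidef.zero
    (fun k _ => hL.conjTranspose_mul_mul_same _)

lemma pe_push {n m : ℕ} (ρ : Matrix (Fin n) (Fin n) ℂ) {X Z : Type} (f : X → Z)
    (Δ : X → Matrix (Fin n × Fin m) (Fin n × Fin m) ℂ)
    (hΔ : (Function.support Δ).Finite) :
    push f (fun a => pe ρ (Δ a)) = fun z => pe ρ (push f Δ z) := by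
  funext z
  show _ = peHom ρ (push f Δ z)
  unfold push
  rw [AddMonoidHom.map_finsum (peHom ρ)
    (hΔ.subset (fun x hx => by
      simp only [Function.mem_support] at hx ⊢
      intro h0
      apply hx
      rw [h0]
      simp))]
  congr 1
  funext x
  exact (AddMonoidHom.map_finsum_Prop (peHom ρ) _).symm

/-- Partial evaluation preserves kernel bisimilarity of quantum Markov chains. -/
theorem stmt15 (n m : ℕ) {X Y : Type}
    (c : X → X → Matrix (Fin n × Fin m) (Fin n × Fin m) ℂ)
    (dY : Y → Y → Matrix (Fin n × Fin m) (Fin n × Fin m) ℂ)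
    (hc : IsQMC c) (hd : IsQMC dY)
    (ρ : Matrix (Fin n) (Fin n) ℂ) (hρ : IsDensity ρ) (x : X) (y : Y)
    (h : QKernelBisim c dY x y) :
    QKernelBisim (fun a a' => pe ρ (c a a')) (fun b b' => pe ρ (dY b b')) x y := by
  obtain ⟨Z, e, m₁, m₂, he, h1, h2, hxy⟩ := h
  refine ⟨Z, fun z w => pe ρ (e z w), m₁, m₂, ?_, ?_, ?_, hxy⟩
  · intro z
    obtain ⟨hfin, hpsd, hsub⟩ := he z
    refine ⟨hfin.subset (fun w hw => ?_), fun w => pe_psd hρ.1 (hpsd w), ?_⟩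
    · simp only [Function.mem_support] at hw ⊢
      intro h0
      apply hw
      rw [h0]
      show peHom ρ 0 = 0
      simp
    · have : (∑ᶠ w, pe ρ (e z w)) = pe ρ (∑ᶠ w, e z w) := by
        show (∑ᶠ w, peHom ρ (e z w)) = peHom ρ (∑ᶠ w, e z w)
        exact (AddMonoidHom.map_finsum (peHom ρ) hfin).symm
      rw [this]
      have h1' : (1 : Matrix (Fin m) (Fin m) ℂ) - pe ρ (∑ᶠ w, e z w)
          = pe ρ (1 - ∑ᶠ w, e z w) := by
        rw [← pe_one (m := m) hρ.2]
        exact (map_sub (peHom ρ) _ _).symm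
      rw [h1']
      exact pe_psd hρ.1 hsub
  · intro a
    have := h1 a
    show (fun w => pe ρ (e (m₁ a) w)) = _
    rw [this]
    exact (pe_push ρ m₁ (c a) (hc a).1).symm
  · intro b
    have := h2 b
    show (fun w => pe ρ (e (m₂ b) w)) = _
    rw [this]
    exact (pe_push ρ m₂ (dY b) (hd b).1).symm
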